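/- With the setup of the previous statement, every element of the subgroup G_{i⁻} generated by {γ_j : j < i} can be written uniquely in the form Σ_{j<i} m_j·γ_j where m_j = 0 for all but finitely many j, 0 ≤ m_j < n_j whenever n_j ≠ ∞, and m_j ∈ ℤ when n_j = ∞. -/

import Mathlib

/-!
Existence: by well-founded induction on `i`, write `x` as a finite combination, reduce the
coefficient of the largest index `a` modulo `n_a`, and absorb the multiple of `n_a • γ a`, which
lies in `G_{a⁻}`, into the remaining terms. Uniqueness: the difference of two digit expansions has
coefficients `|c_j| < n_j`; at the largest index `a` of its support, `c_a • γ a ∈ G_{a⁻}` with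
`0 < |c_a| < n_a`, contradicting the minimality of `n_a`.
-/

open Finsupp Set

section DigitExpansion

variable {ι Ψ : Type*} [LinearOrder ι] [AddCommGroup Ψ] (γ : ι → Ψ)

/-- The subgroup `G_{i⁻}`. -/
def closureBelow (i : ι) : AddSubgroup Ψ :=
  AddSubgroup.closure {y | ∃ j < i, y = γ j}

/-- The order `n_i` of `γ i` modulo `G_{i⁻}`, with `⊤` for infinite order. -/
noncomputable def relOrder (i : ι) : ℕ∞ :=
  sInf {r : ℕ∞ | ∃ r' : ℕ, r = (r' : ℕ∞) ∧ 0 < r' ∧ (r' : ℤ) • γ i ∈ closureBelow γ i}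

def IsDigit (N : ℕ∞) (c : ℤ) : Prop :=
  N ≠ ⊤ → 0 ≤ c ∧ (c.toNat : ℕ∞) < N

def digitExpansions (s : Set ι) : Set (ι →₀ ℤ) :=
  {l | l ∈ supported ℤ ℤ s ∧ ∀ j ∈ s, IsDigit (relOrder γ j) (l j)}

theorem IsDigit.natAbs_sub_lt {N : ℕ∞} {a b : ℤ} (ha : IsDigit N a) (hb : IsDigit N b) :
    ((a - b).natAbs : ℕ∞) < N := by
  rcases eq_or_ne N ⊤ with rfl | hN
  · exact ENat.natCast_lt_top _
  · obtain ⟨ha₀, haN⟩ := ha hN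
    obtain ⟨hb₀, hbN⟩ := hb hN
    lift N to ℕ using hN
    norm_cast at haN hbN ⊢
    omega

theorem isDigit_zero {N : ℕ∞} (hN : N ≠ 0) : IsDigit N 0 :=
  fun _ => ⟨le_rfl, by simpa using pos_iff_ne_zero.2 hN⟩

theorem mem_closureBelow_iff {i : ι} {x : Ψ} :
    x ∈ closureBelow γ i ↔ ∃ l ∈ supported ℤ ℤ (Iio i), linearCombination ℤ γ l = x := by
  have : {y | ∃ j < i, y = γ j} = γ '' Iio i := by ext; simp [eq_comm]
  rw [closureBelow, this, ← Submodule.span_int_eq_addSubgroupClosure,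
    Submodule.mem_toAddSubgroup, mem_span_image_iff_linearCombination]

theorem relOrder_le_natAbs {j : ι} {c : ℤ} (hc : c ≠ 0) (h : c • γ j ∈ closureBelow γ j) :
    relOrder γ j ≤ c.natAbs := by
  refine sInf_le ⟨c.natAbs, rfl, Int.natAbs_pos.2 hc, ?_⟩
  rcases Int.natAbs_eq c with hc' | hc'
  · rwa [← hc']
  · rw [← neg_eq_iff_eq_neg.2 hc', neg_smul]
    exact neg_mem h

theorem exists_eq_relOrder {j : ι} (hj : relOrder γ j ≠ ⊤) :
    ∃ N : ℕ, relOrder γ j = N ∧ 0 < N ∧ (N : ℤ) • γ j ∈ closureBelow γ j := by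
  have hne : {r : ℕ∞ | ∃ r' : ℕ, r = r' ∧ 0 < r' ∧ (r' : ℤ) • γ j ∈ closureBelow γ j}.Nonempty := by
    contrapose! hj
    rw [relOrder, hj, sInf_empty]
  exact csInf_mem hne

theorem relOrder_ne_zero (j : ι) : relOrder γ j ≠ 0 := by
  refine (lt_of_lt_of_le zero_lt_one (le_sInf ?_)).ne'
  rintro _ ⟨r, rfl, hr, -⟩
  exact_mod_cast hr

/-- Division with remainder by the relative order `n_j`. -/
theorem exists_isDigit_sub_smul_mem (j : ι) (b : ℤ) :
    ∃ r, IsDigit (relOrder γ j) r ∧ (b - r) • γ j ∈ closureBelow γ j := by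
  by_cases hj : relOrder γ j = ⊤
  · exact ⟨b, fun h => absurd hj h, by simp⟩
  obtain ⟨N, hN, hN₀, hNmem⟩ := exists_eq_relOrder γ hj
  refine ⟨b % N, fun _ => ⟨Int.emod_nonneg b (by omega), ?_⟩, ?_⟩
  · rw [hN]
    have := Int.emod_lt_of_pos b (by omega : (0 : ℤ) < N)
    exact_mod_cast (by omega : (b % N).toNat < N)
  · have : (b - b % N) • γ j = (b / N) • ((N : ℤ) • γ j) := by
      rw [smul_smul, Int.emod_def, sub_sub_cancel, mul_comm]
    rw [this]
    exact zsmul_mem hNmem _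

theorem digitExpansions_mono {s t : Set ι} (hst : s ⊆ t) :
    digitExpansions γ s ⊆ digitExpansions γ t := by
  rintro l ⟨hl, hdig⟩
  refine ⟨supported_mono hst hl, fun j _ => ?_⟩
  by_cases hj : j ∈ s
  · exact hdig j hj
  · rw [(mem_supported' ℤ l).1 hl j hj]
    exact isDigit_zero (relOrder_ne_zero γ j)

theorem exists_mem_digitExpansions [WellFoundedLT ι] {i : ι} {x : Ψ} (hx : x ∈ closureBelow γ i) :
    ∃ l ∈ digitExpansions γ (Iio i), linearCombination ℤ γ l = x := by
  induction i using WellFoundedLT.induction generalizing x with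
  | _ i ih =>
  obtain ⟨l, hl, rfl⟩ := (mem_closureBelow_iff γ).1 hx
  induction l using Finsupp.induction_on_max with
  | zero => exact ⟨0, ⟨zero_mem _, fun j _ => isDigit_zero (relOrder_ne_zero γ j)⟩, map_zero _⟩
  | single_add a b f hfa hb _ =>
    have hfa0 : f a = 0 := notMem_support_iff.1 fun h => (hfa a h).false
    have ha : a < i := hl (by simp [hfa0, hb])
    have hf : f ∈ supported ℤ ℤ (Iio a) := fun c hc => hfa c hc
    obtain ⟨r, hr, hbr⟩ := exists_isDigit_sub_smul_mem γ a b
    obtain ⟨l', ⟨hl', hdig'⟩, hl'x⟩ := ih a ha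
      (add_mem ((mem_closureBelow_iff γ).2 ⟨f, hf, rfl⟩) hbr)
    obtain ⟨hl'i, hdig'i⟩ := digitExpansions_mono γ (Iio_subset_Iio ha.le) ⟨hl', hdig'⟩
    refine ⟨single a r + l', ⟨add_mem (single_mem_supported ℤ r ha) hl'i, fun j hj => ?_⟩, ?_⟩
    · rcases eq_or_ne j a with rfl | hja
      · simpa [(mem_supported' ℤ l').1 hl' j (lt_irrefl j)] using hr
      · simpa [hja] using hdig'i j hj
    · simp only [map_add, linearCombination_single, hl'x, sub_smul]
      abel

theorem eq_zero_of_linearCombination_eq_zero (f : ι →₀ ℤ)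
    (hf : ∀ j ∈ f.support, ((f j).natAbs : ℕ∞) < relOrder γ j)
    (h₀ : linearCombination ℤ γ f = 0) : f = 0 := by
  induction f using Finsupp.induction_on_max with
  | zero => rfl
  | single_add a b f hfa hb _ =>
    have hfa0 : f a = 0 := notMem_support_iff.1 fun h => (hfa a h).false
    have hmem : b • γ a ∈ closureBelow γ a := by
      rw [map_add, linearCombination_single, add_eq_zero_iff_eq_neg] at h₀
      rw [h₀]
      exact neg_mem ((mem_closureBelow_iff γ).2 ⟨f, fun c hc => hfa c hc, rfl⟩)
    have hlt := hf a (by simp [hfa0, hb])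
    simp only [Finsupp.add_apply, single_eq_same, hfa0, add_zero] at hlt
    exact absurd (relOrder_le_natAbs γ hb hmem) (not_le.2 hlt)

theorem injOn_linearCombination_digitExpansions (s : Set ι) :
    InjOn (linearCombination ℤ γ) (digitExpansions γ s) := by
  rintro l₁ ⟨h₁, d₁⟩ l₂ ⟨h₂, d₂⟩ h
  rw [← sub_eq_zero]
  refine eq_zero_of_linearCombination_eq_zero γ _ (fun j hj => ?_) (by rw [map_sub, h, sub_self])
  have hjs : j ∈ s := sub_mem h₁ h₂ hj
  exact (d₁ j hjs).natAbs_sub_lt (d₂ j hjs)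

end DigitExpansion

theorem Finsupp.linearCombination_eq_finsum {ι R M : Type*} [Semiring R] [AddCommMonoid M]
    [Module R M] (v : ι → M) (l : ι →₀ R) :
    linearCombination R v l = ∑ᶠ j, l j • v j := by
  rw [linearCombination_apply, Finsupp.sum]
  exact (finsum_eq_finsetSum_of_support_subset _ fun j hj =>
    mem_support_iff.2 (Function.support_smul_subset_left (⇑l) v hj)).symm

theorem stmt1_general {Ψ : Type*} [AddCommGroup Ψ] (γ : Ordinal → Ψ)
    (n : Ordinal → ℕ∞)
    (hn : ∀ i : Ordinal, n i = sInf {r : ℕ∞ | ∃ r' : ℕ, r = (r' : ℕ∞) ∧ 0 < r' ∧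
      (r' : ℤ) • γ i ∈ AddSubgroup.closure {x | ∃ j < i, x = γ j}})
    (i : Ordinal)
    (x : Ψ) (hx : x ∈ AddSubgroup.closure {y | ∃ j < i, y = γ j}) :
    ∃! m : Ordinal → ℤ,
      (∀ j, ¬ j < i → m j = 0) ∧
      {j | m j ≠ 0}.Finite ∧
      (∀ j < i, n j ≠ ⊤ → 0 ≤ m j ∧ ((m j).toNat : ℕ∞) < n j) ∧
      x = ∑ᶠ j, m j • γ j := by
  obtain rfl : n = relOrder γ := funext hn
  obtain ⟨l, ⟨hl, hdig⟩, rfl⟩ := exists_mem_digitExpansions γ hx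
  refine ⟨l, ⟨(mem_supported' ℤ l).1 hl, l.hasFiniteSupport, hdig,
    linearCombination_eq_finsum γ l⟩, ?_⟩
  rintro m ⟨hm, hfin, hmdig, hsum⟩
  set L := ofSupportFinite m (hfin : (Function.support m).Finite)
  have hL : L ∈ digitExpansions γ (Iio i) := ⟨(mem_supported' ℤ L).2 fun j hj => hm j hj, hmdig⟩
  exact congrArg DFunLike.coe (injOn_linearCombination_digitExpansions γ _ hL ⟨hl, hdig⟩
    (by rw [hsum, linearCombination_eq_finsum]; rfl))

/-- Lemma 2.1, last claim: every element of `G_{i⁻}` has a unique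
representation `Σ_{j<i} m_j·γ_j` with digit-bounded coefficients. -/
theorem stmt1 {Ψ : Type*} [AddCommGroup Ψ] (α : Ordinal) (γ : Ordinal → Ψ)
    (n : Ordinal → ℕ∞)
    (hn : ∀ i : Ordinal, n i = sInf {r : ℕ∞ | ∃ r' : ℕ, r = (r' : ℕ∞) ∧ 0 < r' ∧
      (r' : ℤ) • γ i ∈ AddSubgroup.closure {x | ∃ j < i, x = γ j}})
    (i : Ordinal) (hi : i ≤ α)
    (x : Ψ) (hx : x ∈ AddSubgroup.closure {y | ∃ j < i, y = γ j}) :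
    ∃! m : Ordinal → ℤ,
      (∀ j, ¬ j < i → m j = 0) ∧
      {j | m j ≠ 0}.Finite ∧
      (∀ j < i, n j ≠ ⊤ → 0 ≤ m j ∧ ((m j).toNat : ℕ∞) < n j) ∧
      x = ∑ᶠ j, m j • γ j :=
  stmt1_general γ n hn i x hx
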